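/- arXiv:math/0702125 — 7 statements merged into one kernel-verified Lean document; each statement's English description precedes it below -/
import Mathlib

section
/- A finite-dimensional real vector space ℝⁿ equipped with the maximum (sup) norm is hyperconvex. -/
def Hyperconvex (X : Type*) [MetricSpace X] : Prop :=
  ∀ (ι : Type) (x : ι → X) (r : ι → ℝ),
    (∀ i, 0 ≤ r i) → (∀ i j, dist (x i) (x j) ≤ r i + r j) →
    ∃ p, ∀ i, dist p (x i) ≤ r i

/-- `Fin n → ℝ` carries the sup metric: `dist x y = max_k |x k - y k|`. -/
theorem pi_sup_hyperconvex (n : ℕ) : Hyperconvex (Fin n → ℝ) := by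
  intro ι x r hr hd
  by_cases h : Nonempty ι
  · obtain ⟨i0⟩ := h
    haveI : Nonempty ι := ⟨i0⟩
    have key : ∀ (i j : ι) (k : Fin n), x i k - x j k ≤ r i + r j := by
      intro i j k
      have h1 : dist (x i k) (x j k) ≤ dist (x i) (x j) := dist_le_pi_dist (x i) (x j) k
      have h2 := hd i j
      have h3 : |x i k - x j k| ≤ r i + r j := by
        rw [← Real.dist_eq]; exact h1.trans h2
      linarith [abs_le.mp h3]
    have hbdd : ∀ k : Fin n, BddBelow (Set.range fun i => x i k + r i) := by
      intro k
      refine ⟨x i0 k - r i0, ?_⟩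
      rintro _ ⟨i, rfl⟩
      have := key i0 i k
      simp only
      linarith
    refine ⟨fun k => ⨅ i, (x i k + r i), fun i => ?_⟩
    rw [dist_pi_le_iff (hr i)]
    intro k
    rw [Real.dist_eq, abs_le]
    constructor
    · have : x i k - r i ≤ ⨅ j, (x j k + r j) := by
        apply le_ciInf
        intro j
        have := key i j k
        linarith
      linarith
    · have : (⨅ j, (x j k + r j)) ≤ x i k + r i := ciInf_le (hbdd k) i
      linarith
  · exact ⟨fun _ => 0, fun i => absurd ⟨i⟩ h⟩
end

section
/- The space ℓ^∞ of bounded real sequences with the supremum norm is hyperconvex. -/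
theorem linfty_hyperconvex : Hyperconvex (lp (fun _ : ℕ => ℝ) ⊤) := by
  intro ι x r hr hxr
  rcases isEmpty_or_nonempty ι with h | h
  · exact ⟨0, fun i => (h.false i).elim⟩
  · -- key coordinatewise bound
    have key : ∀ i j n, x j n - r j ≤ x i n + r i := by
      intro i j n
      have h1 : ‖(x j - x i : lp (fun _ : ℕ => ℝ) ⊤) n‖ ≤ ‖x j - x i‖ :=
        lp.norm_apply_le_norm (by simp) _ n
      have h2 : ‖x j - x i‖ ≤ r j + r i := by
        rw [← dist_eq_norm]; exact hxr j i
      have := h1.trans h2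
      rw [lp.coeFn_sub, Pi.sub_apply, Real.norm_eq_abs, abs_le] at this
      linarith [this.2]
    set g : ℕ → ℝ := fun n => ⨅ i, (x i n + r i) with hg
    have hbdd : ∀ n, BddBelow (Set.range fun i => x i n + r i) := by
      intro n
      exact ⟨x h.some n - r h.some, by rintro _ ⟨i, rfl⟩; exact key i h.some n⟩
    have hgle : ∀ i n, g n ≤ x i n + r i := fun i n => ciInf_le (hbdd n) i
    have hgge : ∀ i n, x i n - r i ≤ g n := fun i n =>
      le_ciInf fun j => key j i n
    have hmem : Memℓp g ⊤ := by
      apply memℓp_infty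
      obtain ⟨C, hC⟩ := (memℓp_infty_iff.1 (lp.memℓp (x h.some)))
      refine ⟨C + r h.some, ?_⟩
      rintro _ ⟨n, rfl⟩
      have h1 := hgle h.some n
      have h2 := hgge h.some n
      have h3 : ‖x h.some n‖ ≤ C := hC ⟨n, rfl⟩
      show ‖g n‖ ≤ C + r h.some
      rw [Real.norm_eq_abs] at h3 ⊢
      rw [abs_le] at h3 ⊢
      constructor <;> [linarith [h3.1]; linarith [h3.2]]
    refine ⟨⟨g, hmem⟩, fun i => ?_⟩
    rw [dist_eq_norm]
    apply lp.norm_le_of_forall_le (hr i)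
    intro n
    have h1 := hgle i n
    have h2 := hgge i n
    show ‖g n - x i n‖ ≤ r i
    rw [Real.norm_eq_abs, abs_le]
    constructor <;> linarith
end

section
/- The plane ℝ² with the river metric is hyperconvex, where the river metric is d((x₁,y₁),(x₂,y₂)) = |x₁ - x₂| + |y₁| + |y₂| if x₁ ≠ x₂, and |y₁ - y₂| if x₁ = x₂. -/
/-- The river metric on `ℝ × ℝ`. -/
noncomputable def riverDist (p q : ℝ × ℝ) : ℝ :=
  if p.1 = q.1 then |p.2 - q.2| else |p.1 - q.1| + |p.2| + |q.2|

lemma helly1d {ι : Type} [Nonempty ι] (l u : ι → ℝ) (h : ∀ i j, l i ≤ u j) :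
    ∃ c : ℝ, ∀ i, l i ≤ c ∧ c ≤ u i := by
  obtain ⟨i0⟩ := ‹Nonempty ι›
  refine ⟨sSup (Set.range l), fun i => ⟨?_, ?_⟩⟩
  · exact le_csSup ⟨u i0, by rintro _ ⟨j, rfl⟩; exact h j i0⟩ ⟨i, rfl⟩
  · exact csSup_le (Set.range_nonempty l) (by rintro _ ⟨j, rfl⟩; exact h j i)

theorem river_hyperconvex :
    ∀ (ι : Type) (x : ι → ℝ × ℝ) (r : ι → ℝ),
      (∀ i, 0 ≤ r i) → (∀ i j, riverDist (x i) (x j) ≤ r i + r j) →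
      ∃ p : ℝ × ℝ, ∀ i, riverDist p (x i) ≤ r i := by
  intro ι x r hr hd
  by_cases hne : Nonempty ι
  swap
  · exact ⟨(0, 0), fun i => (hne ⟨i⟩).elim⟩
  by_cases hb : ∃ i0, r i0 < |(x i0).2|
  · -- some ball stays inside one branch {a} × ℝ
    obtain ⟨i0, hi0⟩ := hb
    have key : ∀ j, (x j).1 ≠ (x i0).1 → |(x i0).1 - (x j).1| + |(x j).2| ≤ r j := by
      intro j hj
      have h1 := hd i0 j
      rw [riverDist, if_neg (fun h => hj h.symm)] at h1
      linarith
    set a := (x i0).1 with ha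
    set l : ι → ℝ := fun i =>
      if (x i).1 = a then (x i).2 - r i else -(r i - |a - (x i).1| - |(x i).2|) with hl
    set u : ι → ℝ := fun i =>
      if (x i).1 = a then (x i).2 + r i else r i - |a - (x i).1| - |(x i).2| with hu
    have hlu : ∀ i j, l i ≤ u j := by
      intro i j
      simp only [hl, hu]
      by_cases hia : (x i).1 = a <;> by_cases hja : (x j).1 = a <;>
        simp only [if_pos, if_neg, hia, hja, if_true, if_false]
      · have h1 := hd i j
        rw [riverDist, if_pos (hia.trans hja.symm)] at h1
        have := le_abs_self ((x i).2 - (x j).2)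
        linarith
      · have h1 := hd i j
        rw [riverDist, if_neg (fun h => hja (h.symm.trans hia))] at h1
        have h2 := le_abs_self ((x i).2)
        have h3 : |a - (x j).1| = |(x i).1 - (x j).1| := by rw [hia]
        rw [h3]
        linarith
      · have h1 := hd i j
        rw [riverDist, if_neg (fun h => hia (h.trans hja))] at h1
        have h2 := neg_abs_le ((x j).2)
        have h3 : |a - (x i).1| = |(x i).1 - (x j).1| := by rw [← hja, abs_sub_comm]
        rw [h3]
        linarith
      · have h2 := key i hia
        have h3 := key j hja
        linarith
    obtain ⟨c, hc⟩ := helly1d l u hlu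
    refine ⟨(a, c), fun i => ?_⟩
    obtain ⟨hc1, hc2⟩ := hc i
    by_cases hia : (x i).1 = a
    · rw [riverDist, if_pos hia.symm]
      simp only [hl, hu, if_pos hia] at hc1 hc2
      exact abs_le.mpr ⟨by linarith, by linarith⟩
    · rw [riverDist, if_neg (fun h => hia h.symm)]
      simp only [hl, hu, if_neg hia] at hc1 hc2
      have : |c| ≤ r i - |a - (x i).1| - |(x i).2| := abs_le.mpr ⟨by linarith, hc2⟩
      simp only []
      linarith
  · -- every ball reaches the river axis
    push_neg at hb
    set l : ι → ℝ := fun i => (x i).1 - (r i - |(x i).2|) with hl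
    set u : ι → ℝ := fun i => (x i).1 + (r i - |(x i).2|) with hu
    have hlu : ∀ i j, l i ≤ u j := by
      intro i j
      simp only [hl, hu]
      by_cases hij : (x i).1 = (x j).1
      · have := hb i; have := hb j; rw [hij]; linarith
      · have h1 := hd i j
        rw [riverDist, if_neg hij] at h1
        have h2 := le_abs_self ((x i).1 - (x j).1)
        linarith
    obtain ⟨c, hc⟩ := helly1d l u hlu
    refine ⟨(c, 0), fun i => ?_⟩
    obtain ⟨hc1, hc2⟩ := hc i
    simp only [hl, hu] at hc1 hc2
    by_cases hci : c = (x i).1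
    · rw [riverDist, if_pos hci]
      simpa using hb i
    · rw [riverDist, if_neg hci]
      have h2 : |c - (x i).1| ≤ r i - |(x i).2| := abs_le.mpr ⟨by linarith, by linarith⟩
      simp only [abs_zero]
      linarith
end

section
/- For any metric space (X,d), the map x ↦ d_x, where d_x(y) = d(x,y), is an isometric embedding of X into the space h(X) of minimal extremal functions equipped with the sup metric ρ(f,g) = sup_{x∈X} |f(x) - g(x)|. -/
def IsExtremal {X : Type*} [MetricSpace X] (f : X → ℝ) : Prop :=
  ∀ x y, dist x y ≤ f x + f y

def IsMinimalExtremal {X : Type*} [MetricSpace X] (f : X → ℝ) : Prop :=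
  IsExtremal f ∧ ∀ g : X → ℝ, IsExtremal g → (∀ x, g x ≤ f x) → g = f

theorem distance_cone_isometric {X : Type*} [MetricSpace X] :
    (∀ x : X, IsMinimalExtremal (fun y => dist x y)) ∧
    (∀ x y : X, (⨆ z : X, |dist x z - dist y z|) = dist x y) := by
  constructor
  · intro x
    constructor
    · intro a b
      calc dist a b ≤ dist a x + dist x b := dist_triangle a x b
        _ = dist x a + dist x b := by rw [dist_comm a x]
    · intro g hg hle
      have hgx : g x = 0 := by
        have h1 : g x ≤ 0 := by simpa using hle x
        have h2 : (0:ℝ) ≤ g x + g x := by simpa using hg x x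
        linarith
      funext z
      have h3 : dist x z ≤ g x + g z := hg x z
      have h4 : g z ≤ dist x z := hle z
      linarith
  · intro x y
    have hne : Nonempty X := ⟨x⟩
    apply le_antisymm
    · apply ciSup_le
      intro z
      exact abs_dist_sub_le x y z
    · have : |dist x y - dist y y| = dist x y := by simp [abs_of_nonneg dist_nonneg]
      calc dist x y = |dist x y - dist y y| := this.symm
        _ ≤ ⨆ z : X, |dist x z - dist y z| := by
            apply le_ciSup (f := fun z => |dist x z - dist y z|)
            exact ⟨dist x y, fun r ⟨z, hz⟩ => hz ▸ abs_dist_sub_le x y z⟩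
end

section
/- A metric space (X,d) is hyperconvex if and only if every minimal extremal function on X is a distance cone, i.e., of the form y ↦ d(x,y) for some x ∈ X. -/
lemma IsExtremal.nonneg {X : Type*} [MetricSpace X] {f : X → ℝ} (hf : IsExtremal f) (x : X) :
    0 ≤ f x := by
  have := hf x x
  simp [dist_self] at this
  linarith

/-- Every extremal function dominates a minimal extremal function (Zorn). -/
lemma exists_minimal_extremal_le {X : Type*} [MetricSpace X] (g : X → ℝ) (hg : IsExtremal g) :
    ∃ h : X → ℝ, IsMinimalExtremal h ∧ ∀ x, h x ≤ g x := by
  set S : Set ((X → ℝ)ᵒᵈ) := {f | IsExtremal (OrderDual.ofDual f) ∧ ∀ x, (OrderDual.ofDual f) x ≤ g x} with hS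
  have key : ∀ c ⊆ S, IsChain (· ≤ ·) c → ∃ ub ∈ S, ∀ z ∈ c, z ≤ ub := by
    intro c hcS hc
    rcases c.eq_empty_or_nonempty with rfl | ⟨f0, hf0⟩
    · exact ⟨OrderDual.toDual g, ⟨hg, fun x => le_rfl⟩, fun z hz => hz.elim⟩
    haveI : Nonempty c := ⟨⟨f0, hf0⟩⟩
    set h : X → ℝ := fun x => ⨅ f : c, (OrderDual.ofDual (f : (X → ℝ)ᵒᵈ)) x with hh
    have hbdd : ∀ x : X, BddBelow (Set.range fun f : c => (OrderDual.ofDual (f : (X → ℝ)ᵒᵈ)) x) := by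
      intro x
      exact ⟨0, by rintro _ ⟨f, rfl⟩; exact ((hcS f.2).1).nonneg x⟩
    have hle : ∀ f : c, ∀ x, h x ≤ (OrderDual.ofDual (f : (X → ℝ)ᵒᵈ)) x := by
      intro f x
      exact ciInf_le (hbdd x) f
    have hext : IsExtremal h := by
      intro a b
      refine le_of_forall_pos_le_add ?_
      intro ε hε
      have h1 : h a < h a + ε / 2 := by linarith
      have h2 : h b < h b + ε / 2 := by linarith
      obtain ⟨f1, hf1⟩ := exists_lt_of_ciInf_lt h1
      obtain ⟨f2, hf2⟩ := exists_lt_of_ciInf_lt h2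
      rcases hc.total f1.2 f2.2 with hle12 | hle21
      -- hle12 : f1 ≤ f2 in dual order, i.e. f2 ≤ f1 pointwise
      · have : ∀ x, (OrderDual.ofDual (f2 : (X → ℝ)ᵒᵈ)) x ≤ (OrderDual.ofDual (f1 : (X → ℝ)ᵒᵈ)) x :=
          fun x => hle12 x
        have hx := (hcS f2.2).1 a b
        have := this a
        linarith
      · have : ∀ x, (OrderDual.ofDual (f1 : (X → ℝ)ᵒᵈ)) x ≤ (OrderDual.ofDual (f2 : (X → ℝ)ᵒᵈ)) x :=
          fun x => hle21 x
        have hx := (hcS f1.2).1 a b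
        have := this b
        linarith
    refine ⟨OrderDual.toDual h, ⟨hext, fun x => (hle ⟨f0, hf0⟩ x).trans ((hcS hf0).2 x)⟩, ?_⟩
    intro z hz
    intro x
    exact hle ⟨z, hz⟩ x
  obtain ⟨m, hm⟩ := zorn_le₀ S key
  refine ⟨OrderDual.ofDual m, ⟨hm.prop.1, ?_⟩, hm.prop.2⟩
  intro f hf hfle
  have hfS : OrderDual.toDual f ∈ S := ⟨hf, fun x => (hfle x).trans (hm.prop.2 x)⟩
  have hmf : ∀ x, (OrderDual.ofDual m) x ≤ f x := by
    have := hm.le_of_ge hfS (fun x => hfle x)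
    exact fun x => this x
  funext x
  exact le_antisymm (hfle x) (hmf x)

theorem hyperconvex_iff_distance_cones (X : Type) [MetricSpace X] :
    Hyperconvex X ↔
      ∀ f : X → ℝ, IsMinimalExtremal f → ∃ x : X, f = fun y => dist x y := by
  constructor
  · intro H f hf
    obtain ⟨p, hp⟩ := H X id f (fun x => hf.1.nonneg x)
      (fun i j => by simpa using hf.1 i j)
    refine ⟨p, ?_⟩
    have : (fun y => dist p y) = f := by
      apply hf.2
      · intro a b
        calc dist a b ≤ dist a p + dist p b := dist_triangle a p b
        _ = dist p a + dist p b := by rw [dist_comm a p]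
      · exact fun x => hp x
    exact this.symm
  · intro H
    -- X is nonempty
    have hne : Nonempty X := by
      rcases isEmpty_or_nonempty X with hX | hX
      · obtain ⟨x, _⟩ := H (fun _ => 0)
          ⟨fun x => (IsEmpty.false x).elim, fun g _ _ => funext fun x => (IsEmpty.false x).elim⟩
        exact ⟨x⟩
      · exact hX
    intro ι x r hr hxr
    rcases isEmpty_or_nonempty ι with hι | hι
    · obtain ⟨p⟩ := hne
      exact ⟨p, fun i => (IsEmpty.false i).elim⟩
    set g : X → ℝ := fun y => ⨅ i, (dist y (x i) + r i) with hgdef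
    have hbdd : ∀ y : X, BddBelow (Set.range fun i => dist y (x i) + r i) := by
      intro y
      exact ⟨0, by rintro _ ⟨i, rfl⟩; simpa using add_nonneg dist_nonneg (hr i)⟩
    have hg : IsExtremal g := by
      intro a b
      refine le_ciInf_add_ciInf ?_
      intro i j
      calc dist a b ≤ dist a (x i) + dist (x i) (x j) + dist (x j) b := dist_triangle4 a (x i) (x j) b
      _ ≤ dist a (x i) + (r i + r j) + dist b (x j) := by
          rw [dist_comm (x j) b]; linarith [hxr i j]
      _ = dist a (x i) + r i + (dist b (x j) + r j) := by ring
    obtain ⟨h, hmin, hle⟩ := exists_minimal_extremal_le g hg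
    obtain ⟨p, hp⟩ := H h hmin
    refine ⟨p, fun i => ?_⟩
    have h1 : h (x i) ≤ g (x i) := hle (x i)
    have h2 : g (x i) ≤ dist (x i) (x i) + r i := ciInf_le (hbdd (x i)) i
    have h3 : h (x i) = dist p (x i) := by rw [hp]
    rw [← h3]
    simpa [dist_self] using h1.trans h2
end

section
/- If a metric space (X,d) satisfies the four-point property, and f is a minimal extremal function on X, then the extended space X ∪ {f}, metrized by setting the distance between f and x ∈ X to be f(x) (and using d on X), also satisfies the four-point property. -/
/-- Distance on `X ∪ {f}`, where `none` represents the extra point `f`. -/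
noncomputable def extDist {X : Type*} [MetricSpace X] (f : X → ℝ) :
    Option X → Option X → ℝ
  | some x, some y => dist x y
  | some x, none => f x
  | none, some y => f y
  | none, none => 0

lemma approx_min {X : Type*} [MetricSpace X] (f : X → ℝ)
    (hf : IsMinimalExtremal f) :
    ∀ x : X, ∀ ε : ℝ, 0 < ε → ∃ y, f x + f y ≤ dist x y + ε := by
  classical
  by_contra h
  push_neg at h
  obtain ⟨x, ε, hε, hx⟩ := h
  set g : X → ℝ := fun z => if z = x then f x - ε / 2 else f z with hg
  have hgx : g x = f x - ε / 2 := by simp [hg]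
  have hεfx : ε < 2 * f x := by
    have := hx x
    have : dist x x = 0 := dist_self x
    nlinarith [hx x, dist_self x]
  have hext : IsExtremal g := by
    intro z w
    by_cases hz : z = x <;> by_cases hw : w = x
    · simp only [hg, if_pos hz, if_pos hw]
      rw [hz, hw, dist_self]
      linarith
    · simp only [hg, if_pos hz, if_neg hw]
      rw [hz]
      have := hx w
      linarith
    · simp only [hg, if_neg hz, if_pos hw]
      rw [hw, dist_comm]
      have := hx z
      linarith
    · simp only [hg, if_neg hz, if_neg hw]
      exact hf.1 z w
  have hle : ∀ z, g z ≤ f z := by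
    intro z
    by_cases hz : z = x
    · subst hz; rw [hgx]; linarith
    · simp [hg, hz]
  have := hf.2 g hext hle
  have : g x = f x := by rw [this]
  rw [hgx] at this
  linarith

lemma key {X : Type*} [MetricSpace X]
    (h4 : ∀ x y u v : X,
      dist x y + dist u v ≤ max (dist x u + dist y v) (dist x v + dist y u))
    (f : X → ℝ) (hf : IsMinimalExtremal f) :
    ∀ b u v : X, f b + dist u v ≤ max (f u + dist b v) (f v + dist b u) := by
  intro b u v
  refine le_of_forall_pos_le_add ?_
  intro ε hε
  obtain ⟨w, hw⟩ := approx_min f hf b ε hε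
  have h1 : f b + dist u v ≤ dist b w + ε - f w + dist u v := by linarith
  have h2 := h4 w b u v
  rw [dist_comm w b] at h2
  have hwu := hf.1 w u
  have hwv := hf.1 w v
  rcases le_max_iff.mp h2 with h | h
  · have : f b + dist u v ≤ f u + dist b v + ε := by linarith
    calc f b + dist u v ≤ f u + dist b v + ε := this
      _ ≤ max (f u + dist b v) (f v + dist b u) + ε := by
          gcongr; exact le_max_left _ _
  · have : f b + dist u v ≤ f v + dist b u + ε := by linarith
    calc f b + dist u v ≤ f v + dist b u + ε := this
      _ ≤ max (f u + dist b v) (f v + dist b u) + ε := by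
          gcongr; exact le_max_right _ _

theorem four_point_extension {X : Type*} [MetricSpace X]
    (h4 : ∀ x y u v : X,
      dist x y + dist u v ≤ max (dist x u + dist y v) (dist x v + dist y u))
    (f : X → ℝ) (hf : IsMinimalExtremal f) :
    ∀ a b u v : Option X,
      extDist f a b + extDist f u v ≤
        max (extDist f a u + extDist f b v)
            (extDist f a v + extDist f b u) := by
  rintro (_ | a) (_ | b) (_ | u) (_ | v) <;>
    simp only [extDist]
  · simp
  · simpa using le_max_left (f v) (f v)
  · simpa using le_max_right (f u) (f u)
  · -- a=b=none : 0 + dist u v ≤ max (f u + f v) (f v + f u)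
    have := hf.1 u v
    have h' := le_max_left (f u + f v) (f v + f u)
    linarith
  · simpa using le_max_left (f b) (f b)
  · -- a=u=none : f b + f v ≤ max (0 + dist b v) (f v + f b)
    have : f b + f v ≤ f v + f b := by linarith
    exact le_trans this (le_max_right _ _)
  · -- a=v=none : f b + f u ≤ max (f u + f b) (0 + dist b u)
    have : f b + f u ≤ f u + f b := by linarith
    exact le_trans this (le_max_left _ _)
  · -- a=none : f b + dist u v ≤ max (f u + dist b v) (f v + dist b u)
    exact key h4 f hf b u v
  · simpa using le_max_left (f a) (f a)
  · -- b=u=none : f a + f v ≤ max (f a + f v) _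
    exact le_max_left _ _
  · -- b=v=none : f a + f u ≤ max (dist a u + 0) (f a + f u)
    exact le_max_right _ _
  · -- b=none : f a + dist u v ≤ max (dist a u + f v) (dist a v + f u)
    have := key h4 f hf a v u
    rw [dist_comm v u] at this
    calc f a + dist u v ≤ max (f v + dist a u) (f u + dist a v) := this
      _ = max (dist a u + f v) (dist a v + f u) := by rw [add_comm, add_comm (f u)]
  · -- u=v=none : dist a b + 0 ≤ max (f a + f b) _
    simpa using hf.1 a b
  · -- u=none : dist a b + f v ≤ max (f a + dist b v) (dist a v + f b)
    have := key h4 f hf v a b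
    rw [dist_comm v b, dist_comm v a] at this
    calc dist a b + f v = f v + dist a b := by ring
      _ ≤ max (f a + dist b v) (f b + dist a v) := this
      _ = max (f a + dist b v) (dist a v + f b) := by rw [add_comm (f b)]
  · -- v=none : dist a b + f u ≤ max (dist a u + f b) (f a + dist b u)
    have := key h4 f hf u b a
    rw [dist_comm u a, dist_comm u b, dist_comm b a] at this
    calc dist a b + f u = f u + dist a b := by ring
      _ ≤ max (f b + dist a u) (f a + dist b u) := this
      _ = max (dist a u + f b) (f a + dist b u) := by rw [add_comm (f b)]
  · exact h4 a b u v
end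

section
/- Every complete metric tree is hyperconvex: if (X,d) is a complete, connected metric space satisfying the four-point property, then every family of closed balls B(xᵢ,rᵢ) with d(xᵢ,xⱼ) ≤ rᵢ + rⱼ for all i,j has nonempty intersection. -/
lemma chain_connected' {X : Type} [MetricSpace X] [ConnectedSpace X]
    (a b : X) (δ : ℝ) (hδ : 0 < δ) :
    ∃ n : ℕ, ∃ f : ℕ → X, f 0 = a ∧ f n = b ∧ ∀ k < n, dist (f k) (f (k+1)) < δ := by
  classical
  set S : Set X := {x | ∃ n : ℕ, ∃ f : ℕ → X,
      f 0 = a ∧ f n = x ∧ ∀ k < n, dist (f k) (f (k+1)) < δ} with hSdef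
  have hext : ∀ x ∈ S, ∀ y : X, dist x y < δ → y ∈ S := by
    rintro x ⟨n, f, h0, hn, hst⟩ y hxy
    refine ⟨n+1, fun k => if k = n+1 then y else f k, ?_, ?_, ?_⟩
    · show (if 0 = n+1 then y else f 0) = a
      rw [if_neg (by omega)]; exact h0
    · show (if n+1 = n+1 then y else f (n+1)) = y
      rw [if_pos rfl]
    · intro k hk
      show dist (if k = n+1 then y else f k) (if k+1 = n+1 then y else f (k+1)) < δ
      rw [if_neg (by omega)]
      rcases eq_or_lt_of_le (Nat.lt_succ_iff.mp hk) with h | h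
      · rw [h, if_pos rfl, hn]; exact hxy
      · rw [if_neg (by omega)]; exact hst k h
  have haS : a ∈ S := ⟨0, fun _ => a, rfl, rfl, by omega⟩
  have hopen : IsOpen S := by
    rw [Metric.isOpen_iff]
    intro x hx
    exact ⟨δ, hδ, fun y hy => hext x hx y (by rw [dist_comm]; exact hy)⟩
  have hclosed : IsClosed S := by
    refine isClosed_of_closure_subset fun x hx => ?_
    obtain ⟨y, hyS, hxy⟩ := Metric.mem_closure_iff.mp hx δ hδ
    exact hext y hyS x (by rw [dist_comm]; exact hxy)
  have : S = Set.univ := IsClopen.eq_univ ⟨hclosed, hopen⟩ ⟨a, haS⟩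
  have hb : b ∈ S := this ▸ Set.mem_univ b
  exact hb

lemma approx_geodesic' {X : Type} [MetricSpace X] [ConnectedSpace X]
    (h4 : ∀ x y u v : X,
      dist x y + dist u v ≤ max (dist x u + dist y v) (dist x v + dist y u))
    (a b : X) (t δ : ℝ) (ht0 : 0 ≤ t) (ht : t ≤ dist a b) (hδ : 0 < δ) :
    ∃ z : X, dist a z ≤ t + δ ∧ dist b z ≤ dist a b - t + δ := by
  classical
  rcases eq_or_lt_of_le ht with h | h
  · refine ⟨b, by linarith, ?_⟩
    rw [dist_self]; linarith
  obtain ⟨n, f, h0, hn, hst⟩ := chain_connected' a b (δ/2) (by linarith)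
  have hex : ∃ k, 2 * t < dist a (f k) - dist b (f k) + dist a b := by
    refine ⟨n, ?_⟩
    rw [hn, dist_comm b b, dist_self]
    linarith
  set k := Nat.find hex with hkdef
  have hPk : 2 * t < dist a (f k) - dist b (f k) + dist a b := Nat.find_spec hex
  have hk0 : k ≠ 0 := by
    intro h0k
    rw [h0k, h0, dist_self, dist_comm b a] at hPk
    linarith
  obtain ⟨j, hj⟩ : ∃ j, k = j + 1 := ⟨k - 1, by omega⟩
  have hPj : ¬ (2 * t < dist a (f j) - dist b (f j) + dist a b) :=
    Nat.find_min hex (by omega)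
  push_neg at hPj
  have hkn : k ≤ n := Nat.find_le (by
    rw [hn, dist_comm b b, dist_self]; linarith)
  have hstep : dist (f j) (f k) < δ / 2 := by
    rw [hj]; exact hst j (by omega)
  have htr2 : dist a b ≤ dist a (f j) + dist (f j) b := dist_triangle a (f j) b
  have h4' := h4 a (f k) (f j) b
  have e1 : dist (f k) b = dist b (f k) := dist_comm _ _
  have e2 : dist (f j) b = dist b (f j) := dist_comm _ _
  have e3 : dist (f k) (f j) = dist (f j) (f k) := dist_comm _ _
  rcases le_max_iff.mp h4' with hc | hc
  · exfalso; linarith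
  · exact ⟨f k, by linarith, by linarith⟩

theorem complete_metric_tree_hyperconvex (X : Type) [MetricSpace X]
    [CompleteSpace X] [ConnectedSpace X]
    (h4 : ∀ x y u v : X,
      dist x y + dist u v ≤ max (dist x u + dist y v) (dist x v + dist y u)) :
    ∀ (ι : Type) (x : ι → X) (r : ι → ℝ),
      (∀ i, 0 ≤ r i) → (∀ i j, dist (x i) (x j) ≤ r i + r j) →
      ∃ p : X, ∀ i, dist p (x i) ≤ r i := by
  intro ι x r hr hxr
  rcases isEmpty_or_nonempty ι with hι | hι
  · obtain ⟨p⟩ := (inferInstance : Nonempty X)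
    exact ⟨p, fun i => (hι.elim i)⟩
  obtain ⟨i₀⟩ := hι
  have hι' : Nonempty ι := ⟨i₀⟩
  -- the function φ
  set φ : X → ℝ := fun p => ⨆ i, (dist p (x i) - r i) with hφdef
  have hbdd : ∀ p : X, BddAbove (Set.range (fun i => dist p (x i) - r i)) := by
    intro p
    refine ⟨dist p (x i₀) + r i₀, ?_⟩
    rintro _ ⟨i, rfl⟩
    have t1 := dist_triangle p (x i₀) (x i)
    have t2 := hxr i₀ i
    have t3 := hr i
    simp only
    linarith
  have hφ_ge : ∀ (p : X) (i : ι), dist p (x i) - r i ≤ φ p :=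
    fun p i => le_ciSup (hbdd p) i
  have hφ_lip : ∀ p q : X, φ p ≤ φ q + dist p q := by
    intro p q
    refine ciSup_le fun i => ?_
    have t1 := dist_triangle p q (x i)
    have t2 := hφ_ge q i
    linarith
  have hφ_lb : ∀ p : X, -(r i₀) ≤ φ p := by
    intro p
    have := hφ_ge p i₀
    have := dist_nonneg (x := p) (y := x i₀)
    linarith
  obtain ⟨p₀⟩ := (inferInstance : Nonempty X)
  set m : ℝ := sInf (Set.range φ) with hmdef
  have hm_ne : (Set.range φ).Nonempty := ⟨φ p₀, ⟨p₀, rfl⟩⟩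
  have hm_bdd : BddBelow (Set.range φ) := by
    refine ⟨-(r i₀), ?_⟩
    rintro _ ⟨p, rfl⟩
    exact hφ_lb p
  have hm_le : ∀ p : X, m ≤ φ p := fun p => csInf_le hm_bdd ⟨p, rfl⟩
  -- strong convexity: distance control for near-minimizers
  have hconv : ∀ p q : X, dist p q ≤ 2 * (max (φ p) (φ q) - m) := by
    intro p q
    refine le_of_forall_pos_le_add fun ε hε => ?_
    obtain ⟨z, hz1, hz2⟩ := approx_geodesic' h4 p q (dist p q / 2) (ε/2)
      (by positivity) (by linarith [dist_nonneg (x := p) (y := q)]) (by linarith)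
    have hφz : φ z ≤ max (φ p) (φ q) - dist p q / 2 + ε/2 := by
      refine ciSup_le fun i => ?_
      have h4' := h4 p q (x i) z
      rcases le_max_iff.mp h4' with hc | hc
      · have := hφ_ge p i
        have e1 : dist (x i) z = dist z (x i) := dist_comm _ _
        have : dist z (x i) - r i ≤ φ p - dist p q / 2 + ε/2 := by linarith
        exact this.trans (by linarith [le_max_left (φ p) (φ q)])
      · have := hφ_ge q i
        have e1 : dist (x i) z = dist z (x i) := dist_comm _ _
        have e2 : dist q (x i) = dist (x i) q := dist_comm _ _
        have : dist z (x i) - r i ≤ φ q - dist p q / 2 + ε/2 := by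
          have := dist_comm q (x i); linarith [hφ_ge q i, h4 p q (x i) z]
        exact this.trans (by linarith [le_max_right (φ p) (φ q)])
    have := hm_le z
    linarith
  -- minimizing sequence
  have hseq : ∀ n : ℕ, ∃ p : X, φ p < m + (1/2 : ℝ)^n := by
    intro n
    have hpow : (0:ℝ) < (1/2 : ℝ)^n := by positivity
    obtain ⟨y, ⟨p, rfl⟩, hy⟩ := exists_lt_of_csInf_lt hm_ne (by linarith : m < m + (1/2:ℝ)^n)
    exact ⟨p, hy⟩
  choose u hu using hseq
  have hdist : ∀ N n : ℕ, N ≤ n → dist (u n) (u N) ≤ 2 * (1/2 : ℝ)^N := by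
    intro N n hNn
    have h1 := hu n
    have h2 := hu N
    have hpow : (1/2 : ℝ)^n ≤ (1/2 : ℝ)^N :=
      pow_le_pow_of_le_one (by norm_num) (by norm_num) hNn
    have := hconv (u n) (u N)
    have hmax : max (φ (u n)) (φ (u N)) ≤ m + (1/2:ℝ)^N :=
      max_le (by linarith) (by linarith)
    linarith
  have hC : CauchySeq u := by
    rw [Metric.cauchySeq_iff']
    intro ε hε
    obtain ⟨N, hN⟩ := exists_pow_lt_of_lt_one (show (0:ℝ) < ε/2 by linarith)
      (show (1/2 : ℝ) < 1 by norm_num)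
    refine ⟨N, fun n hn => ?_⟩
    have := hdist N n hn
    linarith
  obtain ⟨pstar, hpstar⟩ := cauchySeq_tendsto_of_complete hC
  have hφp : φ pstar ≤ m := by
    refine le_of_forall_pos_le_add fun ε hε => ?_
    obtain ⟨N₁, hN₁⟩ := exists_pow_lt_of_lt_one (show (0:ℝ) < ε/2 by linarith)
      (show (1/2 : ℝ) < 1 by norm_num)
    obtain ⟨N₂, hN₂⟩ := (Metric.tendsto_atTop.mp hpstar) (ε/2) (by linarith)
    set n := max N₁ N₂
    have h1 := hu n
    have h2 := hN₂ n (le_max_right _ _)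
    have h3 : (1/2:ℝ)^n ≤ (1/2:ℝ)^N₁ :=
      pow_le_pow_of_le_one (by norm_num) (by norm_num) (le_max_left _ _)
    have h4' := hφ_lip pstar (u n)
    have h5 : dist pstar (u n) = dist (u n) pstar := dist_comm _ _
    linarith
  -- the minimum value is ≤ 0
  have hm0 : m ≤ 0 := by
    by_contra hcon
    push_neg at hcon
    set ε : ℝ := m / 8 with hεdef
    have hε : 0 < ε := by positivity
    have hlt : m - ε < φ pstar := by linarith [hm_le pstar]
    obtain ⟨i, hi⟩ := exists_lt_of_lt_ciSup hlt
    -- hi : m - ε < dist pstar (x i) - r i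
    set D := dist pstar (x i) with hDdef
    set t := min m D with htdef
    have ht0 : 0 ≤ t := le_min hcon.le dist_nonneg
    have htD : t ≤ D := min_le_right _ _
    have htm : t ≤ m := min_le_left _ _
    have hmt : m - t ≤ ε := by
      rcases min_cases m D with ⟨he, _⟩ | ⟨he, hlt'⟩
      · rw [htdef, he]; linarith
      · rw [htdef, he]
        have : 0 ≤ r i := hr i
        linarith
    obtain ⟨z, hz1, hz2⟩ := approx_geodesic' h4 pstar (x i) t ε ht0 htD hε
    have hφz : φ z ≤ 2 * ε := by
      refine ciSup_le fun j => ?_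
      have h4' := h4 pstar (x i) (x j) z
      have e1 : dist (x j) z = dist z (x j) := dist_comm _ _
      have e2 : dist (x i) z = dist (x i) z := rfl
      rcases le_max_iff.mp h4' with hc | hc
      · have := hφ_ge pstar j
        have hφpm : φ pstar ≤ m := hφp
        linarith
      · have hij := hxr i j
        have hri : 0 ≤ r i := hr i
        linarith
    have := hm_le z
    linarith
  refine ⟨pstar, fun i => ?_⟩
  have := hφ_ge pstar i
  linarith
end
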